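/- Let P ⊂ ℝ^d be a polytope and let E ⊂ ℝ^d be a finite set containing a direction of every edge of P. Then the zonotope Z = zone(E) = Σ_{e ∈ E}[-e, e] is a refinement of P: every normal cone of Z at a vertex of Z is contained in the normal cone of P at some vertex of P. -/

import Mathlib

/-- The (open) normal cone of a set `P ⊆ ℝ^d` at a vertex `v`: the linear functionals
maximized over `P` uniquely at `v`. -/
def openNormalCone {d : ℕ} (P : Set (Fin d → ℝ)) (v : Fin d → ℝ) : Set (Fin d → ℝ) :=
  {h | ∀ x ∈ P, x ≠ v → ∑ i, h i * x i < ∑ i, h i * v i}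

/-- The segment `[u,v]` (with `u ≠ v`) is an edge (1-dimensional face / extreme set)
of the convex set `P`. -/
def IsEdgeOf {d : ℕ} (P : Set (Fin d → ℝ)) (u v : Fin d → ℝ) : Prop :=
  u ≠ v ∧ IsExtreme ℝ P (segment ℝ u v)

/-!
If `h` lies in the normal cone of the zonotope at `u`, then `h ⬝ᵥ e i ≠ 0` for every nonzero
generator: otherwise moving the `i`-th coefficient of `u` to `±1` gives another point of the
zonotope with the same value of `h`. So `h` is nonconstant on every edge of `P`, and since every
face of `P` with two points contains an edge of `P`, `h` is maximized on `P` at a single vertex.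
The functionals with a given unique maximizing vertex form open, pairwise disjoint sets, and the
normal cone of the zonotope is convex, hence connected, so a single vertex works for all of it.

A polytope with two points has an edge: a collinear one is a segment, and a non-collinear one has
a proper face with two points, to which induction applies.
-/

open Set

section Faces

variable {E : Type*} [AddCommGroup E] [Module ℝ E] (f : E →ₗ[ℝ] ℝ) {M : ℝ}

theorem isExtreme_setOf_eq_of_le {C : Set E} (hC : ∀ x ∈ C, f x ≤ M) :
    IsExtreme ℝ C {x ∈ C | f x = M} := by
  refine ⟨sep_subset _ _, ?_⟩
  rintro x₁ hx₁ x₂ hx₂ x ⟨-, hx⟩ ⟨s, t, hs, ht, hst, rfl⟩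
  have h₁ := hC x₁ hx₁
  have h₂ := hC x₂ hx₂
  rw [map_add, map_smul, map_smul, smul_eq_mul, smul_eq_mul] at hx
  have hM : s * M + t * M = M := by rw [← add_mul, hst, one_mul]
  refine ⟨hx₁, le_antisymm h₁ (le_of_mul_le_mul_left ?_ hs)⟩
  linarith [mul_le_mul_of_nonneg_left h₂ ht.le]

theorem convexHull_filter_eq_setOf {F : Finset E} (hF : ∀ y ∈ F, f y ≤ M) :
    convexHull ℝ ((F.filter (f · = M) : Finset E) : Set E) =
      {x ∈ convexHull ℝ (F : Set E) | f x = M} := by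
  refine Subset.antisymm (convexHull_min ?_ ?_) ?_
  · intro y hy
    rw [Finset.coe_filter] at hy
    exact ⟨subset_convexHull ℝ _ hy.1, hy.2⟩
  · exact (convex_convexHull ℝ _).inter (convex_hyperplane f.isLinear M)
  · rintro x ⟨hx, hxM⟩
    obtain ⟨w, hw₀, hw₁, rfl⟩ := Finset.mem_convexHull'.1 hx
    have hslack : ∑ y ∈ F, w y * (M - f y) = 0 := by
      simp only [map_sum, map_smul, smul_eq_mul] at hxM
      simp only [mul_sub, Finset.sum_sub_distrib, ← Finset.sum_mul, hw₁, one_mul, hxM, sub_self]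
    have hsupp : ∀ y ∈ F, w y ≠ 0 → f y = M := fun y hy hwy => by
      have := (Finset.sum_eq_zero_iff_of_nonneg fun z hz =>
        mul_nonneg (hw₀ z hz) (sub_nonneg.2 (hF z hz))).1 hslack y hy
      linarith [(mul_eq_zero.1 this).resolve_left hwy]
    refine Finset.mem_convexHull'.2 ⟨w, fun y hy => hw₀ y (Finset.mem_filter.1 hy).1, ?_, ?_⟩
    · rwa [Finset.sum_filter_of_ne hsupp]
    · exact Finset.sum_filter_of_ne fun y hy hwy => hsupp y hy (left_ne_zero_of_smul hwy)

theorem isExtreme_convexHull_filter {F : Finset E} (hF : ∀ y ∈ F, f y ≤ M) :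
    IsExtreme ℝ (convexHull ℝ (F : Set E))
      (convexHull ℝ ((F.filter (f · = M) : Finset E) : Set E)) := by
  rw [convexHull_filter_eq_setOf f hF]
  exact isExtreme_setOf_eq_of_le f fun x hx =>
    convexHull_min hF (convex_halfSpace_le f.isLinear M) hx

theorem exists_convexHull_eq_segment {F : Finset E} {a b : E} (ha : a ∈ F) (hb : b ∈ F)
    (hab : a ≠ b) (hline : ∀ c ∈ F, ∃ t : ℝ, t • (b - a) = c - a) :
    ∃ p q, p ≠ q ∧ convexHull ℝ (F : Set E) = segment ℝ p q := by
  choose! τ hτ using hline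
  have hF : ∀ c ∈ F, AffineMap.lineMap a b (τ c) = c := fun c hc => by
    rw [AffineMap.lineMap_apply_module', hτ c hc, sub_add_cancel]
  obtain ⟨p, hp, hpmin⟩ := F.exists_min_image τ ⟨a, ha⟩
  obtain ⟨q, hq, hqmax⟩ := F.exists_max_image τ ⟨a, ha⟩
  have hseg : segment ℝ p q = AffineMap.lineMap a b '' Icc (τ p) (τ q) := by
    rw [← segment_eq_Icc ((hpmin a ha).trans (hqmax a ha)), image_segment, hF p hp, hF q hq]
  refine ⟨p, q, fun hpq => hab ?_, Subset.antisymm ?_ ?_⟩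
  · have hτ : τ a = τ b := by
      linarith [hpmin a ha, hpmin b hb, hqmax a ha, hqmax b hb, congrArg τ hpq]
    rw [← hF a ha, hτ, hF b hb]
  · refine convexHull_min (fun c hc => ?_) (convex_segment p q)
    rw [hseg]
    exact ⟨τ c, ⟨hpmin c hc, hqmax c hc⟩, hF c hc⟩
  · exact (convex_convexHull ℝ _).segment_subset (subset_convexHull ℝ _ hp)
      (subset_convexHull ℝ _ hq)

end Faces

section NormalCone

variable {d : ℕ}

theorem mem_openNormalCone {P : Set (Fin d → ℝ)} {v h : Fin d → ℝ} :
    h ∈ openNormalCone P v ↔ ∀ x ∈ P, x ≠ v → h ⬝ᵥ x < h ⬝ᵥ v :=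
  Iff.rfl

theorem convex_openNormalCone (P : Set (Fin d → ℝ)) (v : Fin d → ℝ) :
    Convex ℝ (openNormalCone P v) := by
  intro h₁ hh₁ h₂ hh₂ s t hs ht hst x hx hxv
  have k₁ : h₁ ⬝ᵥ x < h₁ ⬝ᵥ v := hh₁ x hx hxv
  have k₂ : h₂ ⬝ᵥ x < h₂ ⬝ᵥ v := hh₂ x hx hxv
  change (s • h₁ + t • h₂) ⬝ᵥ x < (s • h₁ + t • h₂) ⬝ᵥ v
  simp only [add_dotProduct, smul_dotProduct, smul_eq_mul]
  rcases hs.eq_or_lt with rfl | hs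
  · rw [zero_add] at hst
    subst hst
    simpa using k₂
  · nlinarith [mul_lt_mul_of_pos_left k₁ hs, mul_le_mul_of_nonneg_left k₂.le ht]

theorem isOpen_openNormalCone (A : Finset (Fin d → ℝ)) (v : Fin d → ℝ) :
    IsOpen (openNormalCone (A : Set (Fin d → ℝ)) v) := by
  have : openNormalCone (A : Set (Fin d → ℝ)) v =
      ⋂ x ∈ A.erase v, {h | h ⬝ᵥ x < h ⬝ᵥ v} := by
    ext h
    simp only [mem_openNormalCone, mem_iInter, Finset.mem_erase, mem_ofPred_eq]
    exact ⟨fun hh x hx => hh x hx.2 hx.1, fun hh x hx hxv => hh x ⟨hxv, hx⟩⟩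
  rw [this]
  exact isOpen_biInter_finset fun x _ => isOpen_lt (by fun_prop) (by fun_prop)

theorem mem_extremePoints_of_mem_openNormalCone {P : Set (Fin d → ℝ)} {v h : Fin d → ℝ}
    (hv : v ∈ P) (hh : h ∈ openNormalCone P v) : v ∈ P.extremePoints ℝ := by
  have hface : {x ∈ P | h ⬝ᵥ x = h ⬝ᵥ v} = {v} := by
    refine Subset.antisymm (fun x hx => ?_) (singleton_subset_iff.2 ⟨hv, rfl⟩)
    by_contra hxv
    exact (hh x hx.1 hxv).ne hx.2
  rw [← isExtreme_singleton, ← hface]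
  exact isExtreme_setOf_eq_of_le (dotProductBilin ℝ ℝ h) fun x hx =>
    if hxv : x = v then hxv ▸ le_rfl else (hh x hx hxv).le

theorem openNormalCone_convexHull {A : Finset (Fin d → ℝ)} {a : Fin d → ℝ} (ha : a ∈ A) :
    openNormalCone (convexHull ℝ (A : Set (Fin d → ℝ))) a = openNormalCone (A : Set _) a := by
  refine Subset.antisymm (fun h hh x hx => hh x (subset_convexHull ℝ _ hx)) fun h hh => ?_
  have hle : ∀ y ∈ A, h ⬝ᵥ y ≤ h ⬝ᵥ a := fun y hy =>
    if hya : y = a then hya ▸ le_rfl else (hh y hy hya).le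
  have hface : A.filter (h ⬝ᵥ · = h ⬝ᵥ a) = {a} := by
    ext y
    simp only [Finset.mem_filter, Finset.mem_singleton]
    exact ⟨fun hy => by_contra fun hya => (hh y hy.1 hya).ne hy.2, by rintro rfl; exact ⟨ha, rfl⟩⟩
  have := convexHull_filter_eq_setOf (dotProductBilin ℝ ℝ h) hle
  simp only [dotProductBilin_apply_apply] at this
  rw [hface, Finset.coe_singleton, convexHull_singleton] at this
  intro x hx hxa
  have hxle : h ⬝ᵥ x ≤ h ⬝ᵥ a :=
    convexHull_min hle (convex_halfSpace_le (dotProductBilin ℝ ℝ h).isLinear _) hx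
  exact hxle.lt_of_ne fun hxa' => hxa (this.symm.subset ⟨hx, hxa'⟩)

theorem IsPreconnected.subset_openNormalCone {A : Finset (Fin d → ℝ)} {K : Set (Fin d → ℝ)}
    (hK : IsPreconnected K) (hKA : ∀ h ∈ K, ∃ a ∈ A, h ∈ openNormalCone (A : Set _) a)
    {a₀ h₀ : Fin d → ℝ} (ha₀ : a₀ ∈ A) (h₀K : h₀ ∈ K)
    (h₀a₀ : h₀ ∈ openNormalCone (A : Set _) a₀) :
    K ⊆ openNormalCone (A : Set _) a₀ := by
  let V := ⋃ x ∈ A, {h : Fin d → ℝ | h ⬝ᵥ a₀ < h ⬝ᵥ x}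
  have hV : IsOpen V := isOpen_biUnion fun x _ => isOpen_lt (by fun_prop) (by fun_prop)
  have hdisj : Disjoint (openNormalCone (A : Set _) a₀) V := by
    refine disjoint_left.2 fun h hh hV => ?_
    obtain ⟨x, hx, hlt : h ⬝ᵥ a₀ < h ⬝ᵥ x⟩ := mem_iUnion₂.1 hV
    rcases eq_or_ne x a₀ with rfl | hxa
    · exact lt_irrefl _ hlt
    · exact lt_asymm hlt (hh x hx hxa)
  refine hK.subset_left_of_subset_union (isOpen_openNormalCone A a₀) hV hdisj
    (fun h hh => ?_) ⟨h₀, h₀K, h₀a₀⟩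
  obtain ⟨a, ha, hha⟩ := hKA h hh
  rcases eq_or_ne a a₀ with rfl | haa
  · exact Or.inl hha
  · exact Or.inr (mem_iUnion₂.2 ⟨a, ha, hha a₀ ha₀ haa.symm⟩)

end NormalCone

theorem exists_dotProduct_ne_zero_of_linearIndependent {ι n : Type*} [Fintype ι] [Fintype n]
    {v : ι → n → ℝ} (hv : LinearIndependent ℝ v) {c : ι → ℝ} (hc : c ≠ 0) :
    ∃ j, (∑ i, c i • v i) ⬝ᵥ v j ≠ 0 := by
  by_contra! h
  have hself : (∑ i, c i • v i) ⬝ᵥ (∑ i, c i • v i) = 0 := by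
    simp [dotProduct_sum, dotProduct_smul, h]
  exact hc (funext (Fintype.linearIndependent_iff.1 hv c (dotProduct_self_eq_zero.1 hself)))

section Edges

variable {d : ℕ}

/-- The nonzero functionals in the plane spanned by `b - a` and `c - a` form a connected set and
are nonconstant on `F`; if each had a unique maximizer on `F`, then `g` and `-g` would share it. -/
theorem exists_face_of_linearIndependent {F : Finset (Fin d → ℝ)} {a b c : Fin d → ℝ}
    (ha : a ∈ F) (hb : b ∈ F) (hc : c ∈ F) (hind : LinearIndependent ℝ ![b - a, c - a]) :
    ∃ (g : Fin d → ℝ) (M : ℝ), (∀ z ∈ F, g ⬝ᵥ z ≤ M) ∧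
      1 < (F.filter (g ⬝ᵥ · = M)).card ∧ F.filter (g ⬝ᵥ · = M) ⊂ F := by
  by_contra! H
  let φ : (Fin 2 → ℝ) →ₗ[ℝ] Fin d → ℝ := Fintype.linearCombination ℝ ![b - a, c - a]
  let K := φ '' {0}ᶜ
  have hK : IsPreconnected K :=
    (isConnected_compl_singleton_of_one_lt_rank (by simp) 0).isPreconnected.image φ
      φ.continuous_of_finiteDimensional.continuousOn
  have hnonconst : ∀ g ∈ K, ∃ z ∈ F, g ⬝ᵥ z ≠ g ⬝ᵥ a := by
    rintro _ ⟨t, ht, rfl⟩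
    obtain ⟨j, hj⟩ := exists_dotProduct_ne_zero_of_linearIndependent hind ht
    rw [← Fintype.linearCombination_apply] at hj
    fin_cases j
    · exact ⟨b, hb, sub_ne_zero.1 (by simpa [dotProduct_sub] using hj)⟩
    · exact ⟨c, hc, sub_ne_zero.1 (by simpa [dotProduct_sub] using hj)⟩
  have hunique : ∀ g ∈ K, ∃ x ∈ F, g ∈ openNormalCone (F : Set _) x := by
    intro g hg
    obtain ⟨x, hx, hmax⟩ := F.exists_max_image (g ⬝ᵥ ·) ⟨a, ha⟩
    refine ⟨x, hx, fun y hy hyx => (hmax y hy).lt_of_ne fun hyx' => ?_⟩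
    refine H g (g ⬝ᵥ x) hmax (Finset.one_lt_card.2 ⟨x, ?_, y, ?_, hyx.symm⟩) ?_
    · simpa using hx
    · simpa using ⟨hy, hyx'⟩
    obtain ⟨z, hz, hza⟩ := hnonconst g hg
    refine Finset.filter_ssubset.2 ?_
    by_cases hax : g ⬝ᵥ a = g ⬝ᵥ x
    · exact ⟨z, hz, hax ▸ hza⟩
    · exact ⟨a, ha, hax⟩
  let g := φ (Pi.single 0 1)
  have hg : g ∈ K := mem_image_of_mem φ (by simp)
  have hg' : -g ∈ K := ⟨-Pi.single 0 1, by simp, map_neg φ _⟩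
  obtain ⟨x, hx, hgx⟩ := hunique g hg
  have hg'x := hK.subset_openNormalCone hunique hx hg hgx hg'
  obtain ⟨z, hz, hzx⟩ : ∃ z ∈ F, z ≠ x := by
    have hab : a ≠ b := fun hab => hind.ne_zero 0 (by simp [hab])
    by_cases hxa : x = a
    · exact ⟨b, hb, hxa ▸ hab.symm⟩
    · exact ⟨a, ha, Ne.symm hxa⟩
  have h₁ : g ⬝ᵥ z < g ⬝ᵥ x := hgx z hz hzx
  have h₂ : -g ⬝ᵥ z < -g ⬝ᵥ x := hg'x z hz hzx
  rw [neg_dotProduct, neg_dotProduct] at h₂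
  linarith

theorem exists_isEdgeOf_convexHull (F : Finset (Fin d → ℝ)) (hF : 1 < F.card) :
    ∃ p q, IsEdgeOf (convexHull ℝ (F : Set (Fin d → ℝ))) p q := by
  induction F using Finset.strongInduction with
  | H F ih =>
  obtain ⟨a, ha, b, hb, hab⟩ := Finset.one_lt_card.1 hF
  by_cases hline : ∀ c ∈ F, ∃ t : ℝ, t • (b - a) = c - a
  · obtain ⟨p, q, hpq, hseg⟩ := exists_convexHull_eq_segment ha hb hab hline
    exact ⟨p, q, hpq, hseg ▸ IsExtreme.rfl⟩
  push Not at hline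
  obtain ⟨c, hc, hc'⟩ := hline
  have hind := (LinearIndependent.pair_iff' (sub_ne_zero.2 hab.symm)).2 hc'
  obtain ⟨g, M, hM, hcard, hsub⟩ := exists_face_of_linearIndependent ha hb hc hind
  obtain ⟨p, q, hpq, hext⟩ := ih _ hsub hcard
  exact ⟨p, q, hpq, (isExtreme_convexHull_filter (dotProductBilin ℝ ℝ g) hM).trans hext⟩

theorem exists_mem_openNormalCone_of_forall_isEdgeOf {A : Finset (Fin d → ℝ)} (hA : A.Nonempty)
    {h : Fin d → ℝ} (hedge : ∀ p q, IsEdgeOf (convexHull ℝ (A : Set _)) p q → h ⬝ᵥ p ≠ h ⬝ᵥ q) :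
    ∃ a ∈ A, h ∈ openNormalCone (A : Set _) a := by
  obtain ⟨a, ha, hmax⟩ := A.exists_max_image (h ⬝ᵥ ·) hA
  refine ⟨a, ha, fun b hb hba => (hmax b hb).lt_of_ne fun hab => ?_⟩
  have hcard : 1 < (A.filter (h ⬝ᵥ · = h ⬝ᵥ a)).card :=
    Finset.one_lt_card.2 ⟨a, by simpa using ha, b, by simpa using ⟨hb, hab⟩, hba.symm⟩
  obtain ⟨p, q, hpq, hext⟩ := exists_isEdgeOf_convexHull _ hcard
  have hface := convexHull_filter_eq_setOf (dotProductBilin ℝ ℝ h) hmax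
  simp only [dotProductBilin_apply_apply] at hface
  have hp := hface ▸ hext.subset (left_mem_segment ℝ p q)
  have hq := hface ▸ hext.subset (right_mem_segment ℝ p q)
  exact hedge p q ⟨hpq, (isExtreme_convexHull_filter (dotProductBilin ℝ ℝ h) hmax).trans hext⟩
    (hp.2.trans hq.2.symm)

end Edges

section Zonotope

variable {ι E : Type*} [Fintype ι] [AddCommGroup E] [Module ℝ E]

def zonotope (e : ι → E) : Set E :=
  {x | ∃ lam : ι → ℝ, (∀ i, lam i ∈ Icc (-1 : ℝ) 1) ∧ x = ∑ i, lam i • e i}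

theorem exists_add_smul_mem_zonotope {e : ι → E} {u : E} (hu : u ∈ zonotope e) (i : ι) :
    ∃ s : ℝ, s ≠ 0 ∧ u + s • e i ∈ zonotope e := by
  classical
  obtain ⟨lam, hlam, rfl⟩ := hu
  obtain ⟨s, hs, hlams⟩ : ∃ s : ℝ, s ≠ 0 ∧ lam i + s ∈ Icc (-1 : ℝ) 1 := by
    rcases le_or_gt (lam i) 0 with hi | hi
    · exact ⟨1 - lam i, by linarith, by simp⟩
    · exact ⟨-1 - lam i, by linarith, by simp⟩
  refine ⟨s, hs, lam + Pi.single i s, fun j => ?_, ?_⟩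
  · rcases eq_or_ne j i with rfl | hj
    · simpa using hlams
    · simpa [hj] using hlam j
  · simp [add_smul, Finset.sum_add_distrib, Pi.single_apply, ite_smul]

theorem dotProduct_ne_zero_of_mem_openNormalCone_zonotope {d : ℕ} {e : ι → Fin d → ℝ}
    {u h : Fin d → ℝ} (hu : u ∈ zonotope e) (hh : h ∈ openNormalCone (zonotope e) u) {i : ι}
    (hei : e i ≠ 0) : h ⬝ᵥ e i ≠ 0 := by
  obtain ⟨s, hs, hmem⟩ := exists_add_smul_mem_zonotope hu i
  intro h0
  have hlt : h ⬝ᵥ (u + s • e i) < h ⬝ᵥ u := hh _ hmem (by simpa using smul_ne_zero hs hei)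
  simp [dotProduct_add, dotProduct_smul, h0] at hlt

end Zonotope

/-- If the finite set `E` contains a direction of every edge of the polytope `P`, then
the zonotope `zone(E) = Σ_{e ∈ E} [-e,e]` refines `P`: every vertex normal cone of the
zonotope is contained in a vertex normal cone of `P`. -/
theorem stmt_13 (d m : ℕ) (A : Finset (Fin d → ℝ)) (hA : A.Nonempty)
    (P : Set (Fin d → ℝ)) (hP : P = convexHull ℝ (A : Set (Fin d → ℝ)))
    (e : Fin m → (Fin d → ℝ))
    (hdir : ∀ u v : Fin d → ℝ, IsEdgeOf P u v →
      ∃ (i : Fin m) (c : ℝ), c ≠ 0 ∧ u - v = c • e i)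
    (Z : Set (Fin d → ℝ))
    (hZ : Z = {x | ∃ lam : Fin m → ℝ,
      (∀ i, lam i ∈ Set.Icc (-1 : ℝ) 1) ∧ x = ∑ i, lam i • e i}) :
    ∀ u ∈ Set.extremePoints ℝ Z, ∃ v ∈ Set.extremePoints ℝ P,
      openNormalCone Z u ⊆ openNormalCone P v := by
  obtain rfl : Z = zonotope e := hZ
  subst hP
  intro u hu
  have hcov : ∀ h ∈ openNormalCone (zonotope e) u,
      ∃ a ∈ A, h ∈ openNormalCone (A : Set _) a := by
    refine fun h hh => exists_mem_openNormalCone_of_forall_isEdgeOf hA fun p q hpq => ?_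
    obtain ⟨i, c, hc, hpqe⟩ := hdir p q hpq
    have hei : e i ≠ 0 := fun h0 => hpq.1 (sub_eq_zero.1 (by rw [hpqe, h0, smul_zero]))
    rw [← sub_ne_zero, ← dotProduct_sub, hpqe, dotProduct_smul, smul_eq_mul]
    exact mul_ne_zero hc (dotProduct_ne_zero_of_mem_openNormalCone_zonotope hu.1 hh hei)
  rcases (openNormalCone (zonotope e) u).eq_empty_or_nonempty with hempty | ⟨h₀, hh₀⟩
  · obtain ⟨v, hv⟩ := (A.finite_toSet.isCompact_convexHull (𝕜 := ℝ)).extremePoints_nonempty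
      (convexHull_nonempty_iff.2 hA.to_set)
    exact ⟨v, hv, hempty ▸ empty_subset _⟩
  obtain ⟨a, ha, h₀a⟩ := hcov h₀ hh₀
  have hsub := (convex_openNormalCone _ _).isPreconnected.subset_openNormalCone hcov ha hh₀ h₀a
  rw [← openNormalCone_convexHull ha] at hsub h₀a
  exact ⟨a, mem_extremePoints_of_mem_openNormalCone (subset_convexHull ℝ _ ha) h₀a, hsub⟩
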